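/- arXiv:2305.16723 — 5 statements merged into one kernel-verified Lean document; each statement's English description precedes it below -/
import Mathlib

section
/- Let n ≥ 2, let 0 < c < 1, and let E ⊆ ℝ^n be a compact set of class UP_n(c). Set β = (log 2)/log(3/c). Then for every a ∈ E and every r with 0 < r < diam(E)/2, the β-dimensional Hausdorff content satisfies Λ^β(E ∩ B̄(a,r)) ≥ r^β/(2·3^n), where B̄(a,r) is the closed Euclidean ball of center a and radius r. -/
/-!
Taking the UP condition at the scales `R m = r (c/3)^m`, grow from `a` a binary tree in
`E ∩ B̄(a, r)`: at level `m` each point either stays put or moves by a distance in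
`(2 R (m+1), 2 R m / 3]`. Distinct points of level `m` are then `2 R m`-separated and all their
descendants stay within `R m` of them. If `R (m+1) ≤ s < R m`, a ball of radius `s` sees the
descendants of at most `3^n` points of level `m` (a volume packing bound), hence at most a fraction
`3^n 2^(-m)` of the `2^M` leaves of any deep level `M`. Since `(c/3)^β = 1/2`, that fraction is at
most `2 · 3^n (s/r)^β`, and summing over a finite subcover gives the bound.
-/

open Metric Set ENNReal

/-- The `β`-dimensional Hausdorff content of a set `A ⊆ ℝⁿ`: the infimum of `∑ rₖ ^ β`
over all countable covers of `A` by open balls `B(aₖ, rₖ)`. -/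
noncomputable def hausdorffContent {n : ℕ} (β : ℝ) (A : Set (EuclideanSpace ℝ (Fin n))) :
    ℝ≥0∞ :=
  ⨅ (c : ℕ → EuclideanSpace ℝ (Fin n)) (r : ℕ → ℝ) (_ : ∀ k, 0 < r k)
    (_ : A ⊆ ⋃ k, Metric.ball (c k) (r k)), ∑' k, ENNReal.ofReal (r k ^ β)

open Finset Module MeasureTheory

theorem Finset.inter_range_add_one_eq_iff {v w : Finset ℕ} {m : ℕ} :
    v ∩ range (m + 1) = w ∩ range (m + 1) ↔ v ∩ range m = w ∩ range m ∧ (m ∈ v ↔ m ∈ w) := by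
  simp only [Finset.ext_iff, Finset.mem_inter, Finset.mem_range]
  refine ⟨fun h => ⟨fun i => ?_, by simpa using h m⟩, fun ⟨h, hm⟩ i => ?_⟩
  · have := h i
    grind
  · have := h i
    grind

theorem Finset.card_filter_inter_range_eq_le (u : Finset ℕ) {m M : ℕ} :
    ((range M).powerset.filter fun v => v ∩ range m = u).card ≤ 2 ^ (M - m) := by
  calc _ ≤ (Ico m M).powerset.card := by
        refine Finset.card_le_card_of_injOn (· \ range m) ?_ ?_
        · intro v hv
          simp only [coe_filter, mem_powerset, Set.mem_ofPred_eq] at hv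
          rw [mem_coe, mem_powerset]
          intro i hi
          rw [mem_sdiff, mem_range] at hi
          have := mem_range.1 (hv.1 hi.1)
          rw [mem_Ico]
          omega
        · intro v hv w hw hvw
          simp only [Finset.coe_filter, Set.mem_ofPred_eq] at hv hw
          rw [← sdiff_union_inter v (range m), ← sdiff_union_inter w (range m), hv.2, hw.2]
          exact congrArg (· ∪ u) hvw
    _ = 2 ^ (M - m) := by simp

theorem card_le_three_pow_finrank_of_pairwise_le_dist {V ι : Type*} [NormedAddCommGroup V]
    [NormedSpace ℝ V] [FiniteDimensional ℝ V] {I : Finset ι} {p : ι → V} {x : V} {s : ℝ}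
    (hs : 0 < s) (hp : ∀ i ∈ I, p i ∈ closedBall x s)
    (hsep : (I : Set ι).Pairwise fun i j => s ≤ dist (p i) (p j)) :
    I.card ≤ 3 ^ finrank ℝ V := by
  borelize V
  set μ : Measure V := Measure.addHaar
  set d := finrank ℝ V
  have hs2 : 0 < s / 2 := half_pos hs
  have hdisj : (I : Set ι).PairwiseDisjoint fun i => ball (p i) (s / 2) :=
    fun i hi j hj hij => ball_disjoint_ball (by linarith [hsep hi hj hij])
  have hsub : (⋃ i ∈ I, ball (p i) (s / 2)) ⊆ closedBall x (3 * (s / 2)) :=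
    iUnion₂_subset fun i hi => ball_subset_closedBall.trans
      (closedBall_subset_closedBall' (by linarith [mem_closedBall.1 (hp i hi)]))
  have hvol : I.card * (ENNReal.ofReal ((s / 2) ^ d) * μ (ball 0 1)) ≤
      ENNReal.ofReal (3 ^ d) * (ENNReal.ofReal ((s / 2) ^ d) * μ (ball 0 1)) :=
    calc I.card * (ENNReal.ofReal ((s / 2) ^ d) * μ (ball 0 1))
        = μ (⋃ i ∈ I, ball (p i) (s / 2)) := by
          rw [measure_biUnion_finset hdisj fun i _ => measurableSet_ball]
          simp [μ.addHaar_ball_of_pos _ hs2, d]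
      _ ≤ μ (closedBall x (3 * (s / 2))) := measure_mono hsub
      _ = ENNReal.ofReal (3 ^ d) * (ENNReal.ofReal ((s / 2) ^ d) * μ (ball 0 1)) := by
          rw [μ.addHaar_closedBall _ (by positivity), mul_pow, ENNReal.ofReal_mul (by positivity),
            mul_assoc]
  have hpos : ENNReal.ofReal ((s / 2) ^ d) * μ (ball 0 1) ≠ 0 :=
    mul_ne_zero (by simpa using pow_pos hs2 d) (measure_ball_pos μ 0 one_pos).ne'
  have := (ENNReal.mul_le_mul_iff_left hpos
    (mul_ne_top ofReal_ne_top measure_ball_lt_top.ne)).1 hvol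
  exact_mod_cast (show (I.card : ℝ≥0∞) ≤ ((3 ^ d : ℕ) : ℝ≥0∞) by simpa using this)

section Tree

variable {X : Type*}

/-- A vertex of the tree at level `m` is a finite set `v ⊆ {0, …, m - 1}`: the levels at which
the branch leading to it took a step. -/
def binaryTree (a : X) (step : ℕ → X → X) : ℕ → Finset ℕ → X
  | 0, _ => a
  | m + 1, v => if m ∈ v then step m (binaryTree a step m v) else binaryTree a step m v

structure IsSeparatedTree [PseudoMetricSpace X] (g : ℕ → Finset ℕ → X) (R : ℕ → ℝ) : Prop where
  apply_inter_range (m : ℕ) (v : Finset ℕ) : g m (v ∩ range m) = g m v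
  two_mul_le_dist (m : ℕ) {v w : Finset ℕ} :
    v ∩ range m ≠ w ∩ range m → 2 * R m ≤ dist (g m v) (g m w)
  dist_le {m M : ℕ} (v : Finset ℕ) : m ≤ M → dist (g M v) (g m v) ≤ R m

theorem IsSeparatedTree.comp_isometry [PseudoMetricSpace X] {Y : Type*} [PseudoMetricSpace Y]
    {g : ℕ → Finset ℕ → X} {R : ℕ → ℝ} (hg : IsSeparatedTree g R) {f : X → Y}
    (hf : Isometry f) : IsSeparatedTree (fun m v => f (g m v)) R where
  apply_inter_range m v := by rw [hg.apply_inter_range]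
  two_mul_le_dist m v w h := by rw [hf.dist_eq]; exact hg.two_mul_le_dist m h
  dist_le v h := by rw [hf.dist_eq]; exact hg.dist_le v h

theorem binaryTree_congr (a : X) (step : ℕ → X → X) :
    ∀ {m : ℕ} {v w : Finset ℕ}, v ∩ range m = w ∩ range m →
      binaryTree a step m v = binaryTree a step m w
  | 0, _, _, _ => rfl
  | m + 1, v, w, h => by
    obtain ⟨hm, hmem⟩ := inter_range_add_one_eq_iff.1 h
    simp only [binaryTree, hmem, binaryTree_congr a step hm]

variable [PseudoMetricSpace X] (a : X) {step : ℕ → X → X} {R : ℕ → ℝ}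

theorem dist_binaryTree_succ_le
    (hstep : ∀ m x, 2 * R (m + 1) ≤ dist (step m x) x ∧ dist (step m x) x ≤ 2 / 3 * R m)
    (m : ℕ) (v : Finset ℕ) :
    dist (binaryTree a step (m + 1) v) (binaryTree a step m v) ≤ 2 / 3 * R m := by
  rw [binaryTree]
  split_ifs
  · exact (hstep m _).2
  · rw [dist_self]
    exact dist_nonneg.trans (hstep m a).2

theorem two_mul_le_dist_binaryTree (hR : ∀ m, 3 * R (m + 1) ≤ R m)
    (hstep : ∀ m x, 2 * R (m + 1) ≤ dist (step m x) x ∧ dist (step m x) x ≤ 2 / 3 * R m) :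
    ∀ (m : ℕ) {v w : Finset ℕ}, v ∩ range m ≠ w ∩ range m →
      2 * R m ≤ dist (binaryTree a step m v) (binaryTree a step m w)
  | 0, v, w, h => absurd (by simp) h
  | m + 1, v, w, h => by
    by_cases hm : v ∩ range m = w ∩ range m
    · have hmem : ¬(m ∈ v ↔ m ∈ w) := fun hmem => h (inter_range_add_one_eq_iff.2 ⟨hm, hmem⟩)
      have hstep' := (hstep m (binaryTree a step m w)).1
      simp only [binaryTree, binaryTree_congr a step hm]
      by_cases hv : m ∈ v
      · have hw : m ∉ w := fun hw => hmem (iff_of_true hv hw)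
        simpa [hv, hw] using hstep'
      · have hw : m ∈ w := by_contra fun hw => hmem (iff_of_false hv hw)
        simpa [hv, hw, dist_comm] using hstep'
    · have hprev := two_mul_le_dist_binaryTree hR hstep m hm
      have hv := dist_binaryTree_succ_le a hstep m v
      have hw := dist_binaryTree_succ_le a hstep m w
      have := dist_triangle4 (binaryTree a step m v) (binaryTree a step (m + 1) v)
        (binaryTree a step (m + 1) w) (binaryTree a step m w)
      rw [dist_comm] at hv
      linarith [hR m]

theorem dist_binaryTree_le_sub (hR : ∀ m, 3 * R (m + 1) ≤ R m)
    (hstep : ∀ m x, 2 * R (m + 1) ≤ dist (step m x) x ∧ dist (step m x) x ≤ 2 / 3 * R m)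
    (v : Finset ℕ) {m M : ℕ} (hmM : m ≤ M) :
    dist (binaryTree a step M v) (binaryTree a step m v) ≤ R m - R M := by
  induction M, hmM using Nat.le_induction with
  | base => simp
  | succ M _ ih =>
    calc dist (binaryTree a step (M + 1) v) (binaryTree a step m v)
        ≤ dist (binaryTree a step (M + 1) v) (binaryTree a step M v)
          + dist (binaryTree a step M v) (binaryTree a step m v) := dist_triangle _ _ _
      _ ≤ 2 / 3 * R M + (R m - R M) := add_le_add (dist_binaryTree_succ_le a hstep M v) ih
      _ ≤ R m - R (M + 1) := by linarith [hR M]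

theorem isSeparatedTree_binaryTree (hR : ∀ m, 3 * R (m + 1) ≤ R m)
    (hstep : ∀ m x, 2 * R (m + 1) ≤ dist (step m x) x ∧ dist (step m x) x ≤ 2 / 3 * R m) :
    IsSeparatedTree (binaryTree a step) R where
  apply_inter_range m v := binaryTree_congr a step (by rw [Finset.inter_assoc, Finset.inter_self])
  two_mul_le_dist := two_mul_le_dist_binaryTree a hR hstep
  dist_le {m M} v hmM := by
    have := dist_binaryTree_le_sub a hR hstep v hmM
    linarith [dist_nonneg.trans (hstep M a).2]

end Tree

section Counting

variable {V : Type*} [NormedAddCommGroup V] [NormedSpace ℝ V] [FiniteDimensional ℝ V]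
  {g : ℕ → Finset ℕ → V}

open scoped Classical in
theorem IsSeparatedTree.card_filter_mem_ball_le {R : ℕ → ℝ} (hg : IsSeparatedTree g R) {m M : ℕ}
    (hm : 0 < R m) (hmM : m ≤ M) (x : V) {s : ℝ} (hs : s ≤ R m) :
    ((range M).powerset.filter fun v => g M v ∈ ball x s).card ≤
      3 ^ finrank ℝ V * 2 ^ (M - m) := by
  set T := (range M).powerset.filter fun v => g M v ∈ ball x s
  have hfiber : ∀ u ∈ T.image (· ∩ range m), (T.filter fun v => v ∩ range m = u).card ≤
      2 ^ (M - m) := fun u _ =>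
    (Finset.card_le_card (filter_subset_filter _ (filter_subset _ _))).trans
      (card_filter_inter_range_eq_le u)
  have hpack : (T.image (· ∩ range m)).card ≤ 3 ^ finrank ℝ V := by
    refine card_le_three_pow_finrank_of_pairwise_le_dist (p := g m) (x := x)
      (by positivity : 0 < 2 * R m) ?_ ?_
    · intro u hu
      obtain ⟨v, hv, rfl⟩ := mem_image.1 hu
      rw [hg.apply_inter_range, mem_closedBall]
      calc dist (g m v) x ≤ dist (g m v) (g M v) + dist (g M v) x := dist_triangle _ _ _
        _ ≤ R m + s := add_le_add ((dist_comm _ _).trans_le (hg.dist_le v hmM))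
          (mem_ball.1 (mem_filter.1 hv).2).le
        _ ≤ 2 * R m := by linarith
    · intro u hu u' hu' hne
      obtain ⟨v, -, rfl⟩ := mem_image.1 (mem_coe.1 hu)
      obtain ⟨w, -, rfl⟩ := mem_image.1 (mem_coe.1 hu')
      rw [hg.apply_inter_range, hg.apply_inter_range]
      exact hg.two_mul_le_dist m hne
  calc T.card ≤ 2 ^ (M - m) * (T.image (· ∩ range m)).card := card_le_mul_card_image T _ hfiber
    _ ≤ 2 ^ (M - m) * 3 ^ finrank ℝ V := Nat.mul_le_mul_left _ hpack
    _ = 3 ^ finrank ℝ V * 2 ^ (M - m) := Nat.mul_comm _ _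

open scoped Classical in
theorem IsSeparatedTree.exists_card_filter_mem_ball_le {r q β : ℝ}
    (hg : IsSeparatedTree g fun m => r * q ^ m) (hr : 0 < r) (hq0 : 0 < q) (hq1 : q < 1)
    (hqβ : q ^ β = 1 / 2) (x : V) {s : ℝ} (hs : 0 < s) :
    ∃ m, ∀ M, m ≤ M → (((range M).powerset.filter fun v => g M v ∈ ball x s).card : ℝ) ≤
      2 ^ M * (2 * 3 ^ finrank ℝ V * (s / r) ^ β) := by
  have hex : ∃ m, r * q ^ (m + 1) ≤ s := by
    obtain ⟨m, hm⟩ := exists_pow_lt_of_lt_one (div_pos hs hr) hq1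
    refine ⟨m, ?_⟩
    rw [lt_div_iff₀ hr] at hm
    calc r * q ^ (m + 1) = q ^ m * r * q := by ring
      _ ≤ q ^ m * r := mul_le_of_le_one_right (by positivity) hq1.le
      _ ≤ s := hm.le
  set m := Nat.find hex
  have hβ : 0 ≤ β := by
    by_contra! hβ
    have := Real.one_le_rpow_of_pos_of_le_one_of_nonpos hq0 hq1.le hβ.le
    linarith
  have hhalf : (1 / 2 : ℝ) ^ m ≤ 2 * (s / r) ^ β := by
    have : (q ^ (m + 1)) ^ β ≤ (s / r) ^ β :=
      Real.rpow_le_rpow (by positivity) ((le_div_iff₀ hr).2 (by linarith [Nat.find_spec hex])) hβ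
    rw [← Real.rpow_pow_comm hq0.le, hqβ, pow_succ] at this
    linarith
  refine ⟨m, fun M hmM => ?_⟩
  have hcount : ((range M).powerset.filter fun v => g M v ∈ ball x s).card ≤
      3 ^ finrank ℝ V * 2 ^ (M - m) := by
    rcases Nat.eq_zero_or_pos m with hm | hm
    · calc _ ≤ (range M).powerset.card := card_filter_le _ _
        _ = 2 ^ (M - m) := by simp [hm]
        _ ≤ 3 ^ finrank ℝ V * 2 ^ (M - m) := Nat.le_mul_of_pos_left _ (by positivity)
    · have hsm : s < r * q ^ m := by
        have := Nat.find_min hex (Nat.sub_one_lt hm.ne')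
        rwa [Nat.sub_add_cancel hm, not_le] at this
      exact hg.card_filter_mem_ball_le (by positivity) hmM x hsm.le
  calc _ ≤ ((3 ^ finrank ℝ V * 2 ^ (M - m) : ℕ) : ℝ) := by exact_mod_cast hcount
    _ = 2 ^ M * (3 ^ finrank ℝ V * (1 / 2) ^ m) := by
      push_cast
      rw [pow_sub₀ _ two_ne_zero hmM, one_div_pow]
      ring
    _ ≤ 2 ^ M * (3 ^ finrank ℝ V * (2 * (s / r) ^ β)) := by gcongr
    _ = 2 ^ M * (2 * 3 ^ finrank ℝ V * (s / r) ^ β) := by ring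

end Counting

theorem le_hausdorffContent_of_isSeparatedTree {n : ℕ} {S : Set (EuclideanSpace ℝ (Fin n))}
    (hS : IsCompact S) {g : ℕ → Finset ℕ → EuclideanSpace ℝ (Fin n)} {r q β : ℝ}
    (hg : IsSeparatedTree g fun m => r * q ^ m) (hr : 0 < r) (hq0 : 0 < q) (hq1 : q < 1)
    (hqβ : q ^ β = 1 / 2) (hgS : ∀ m v, g m v ∈ S) :
    ENNReal.ofReal (r ^ β / (2 * 3 ^ n)) ≤ hausdorffContent β S := by
  classical
  refine le_iInf fun cs => le_iInf fun rs => le_iInf fun hrs => le_iInf fun hcov => ?_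
  obtain ⟨K, hK⟩ := hS.elim_finite_subcover _ (fun k => isOpen_ball) hcov
  choose m hm using fun k => hg.exists_card_filter_mem_ball_le hr hq0 hq1 hqβ (cs k) (hrs k)
  set M := K.sup m
  have hcover : (range M).powerset ⊆
      K.biUnion fun k => (range M).powerset.filter fun v => g M v ∈ ball (cs k) (rs k) := by
    intro v hv
    obtain ⟨k, hk, hvk⟩ := mem_iUnion₂.1 (hK (hgS M v))
    exact mem_biUnion.2 ⟨k, hk, mem_filter.2 ⟨hv, hvk⟩⟩
  have hcount : (2 : ℝ) ^ M ≤ 2 ^ M * ∑ k ∈ K, 2 * 3 ^ n * (rs k / r) ^ β := by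
    calc (2 : ℝ) ^ M = ((range M).powerset.card : ℝ) := by simp
      _ ≤ ∑ k ∈ K, (((range M).powerset.filter fun v => g M v ∈ ball (cs k) (rs k)).card : ℝ) := by
        exact_mod_cast (Finset.card_le_card hcover).trans card_biUnion_le
      _ ≤ ∑ k ∈ K, 2 ^ M * (2 * 3 ^ n * (rs k / r) ^ β) := by
        refine sum_le_sum fun k hk => ?_
        simpa [finrank_euclideanSpace_fin] using hm k M (le_sup hk)
      _ = 2 ^ M * ∑ k ∈ K, 2 * 3 ^ n * (rs k / r) ^ β := (mul_sum _ _ _).symm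
  have hsum : r ^ β / (2 * 3 ^ n) ≤ ∑ k ∈ K, rs k ^ β := by
    have h1 : 1 ≤ ∑ k ∈ K, 2 * 3 ^ n * (rs k / r) ^ β :=
      (le_mul_iff_one_le_right (by positivity)).1 hcount
    simp only [Real.div_rpow (hrs _).le hr.le, mul_div_assoc', ← sum_div, ← mul_sum] at h1
    rw [le_div_iff₀ (by positivity)] at h1
    rw [div_le_iff₀ (by positivity)]
    linarith
  calc ENNReal.ofReal (r ^ β / (2 * 3 ^ n)) ≤ ENNReal.ofReal (∑ k ∈ K, rs k ^ β) :=
        ENNReal.ofReal_le_ofReal hsum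
    _ = ∑ k ∈ K, ENNReal.ofReal (rs k ^ β) :=
        ENNReal.ofReal_sum_of_nonneg fun k _ => Real.rpow_nonneg (hrs k).le β
    _ ≤ ∑' k, ENNReal.ofReal (rs k ^ β) := ENNReal.sum_le_tsum K

theorem Real.inv_rpow_log_div_log {x y : ℝ} (hx : 0 < x) (hx1 : x ≠ 1) (hy : 0 < y) :
    x⁻¹ ^ (Real.log y / Real.log x) = y⁻¹ := by
  rw [Real.inv_rpow hx.le, Real.log_div_log, Real.rpow_logb hx hx1 hy]

theorem stmt_0_general (n : ℕ) (c : ℝ) (hc0 : 0 < c) (hc1 : c < 1)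
    (E : Set (EuclideanSpace ℝ (Fin n))) (hEcomp : IsCompact E)
    (hUP : ∀ a ∈ E, ∀ r : ℝ, 0 < r → r < Metric.diam E / 2 →
      ∃ x ∈ E, c * r < dist x a ∧ dist x a < r)
    (β : ℝ) (hβ : β = Real.log 2 / Real.log (3 / c))
    (a : EuclideanSpace ℝ (Fin n)) (ha : a ∈ E)
    (r : ℝ) (hr0 : 0 < r) (hr : r < Metric.diam E / 2) :
    ENNReal.ofReal (r ^ β / (2 * 3 ^ n)) ≤
      hausdorffContent β (E ∩ Metric.closedBall a r) := by
  set R : ℕ → ℝ := fun m => r * (c / 3) ^ m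
  have hR : ∀ m, 3 * R (m + 1) ≤ R m := fun m =>
    calc 3 * R (m + 1) = c * R m := by simp only [R]; ring
      _ ≤ R m := mul_le_of_le_one_left (by positivity) hc1.le
  have hstep : ∀ m (x : E), ∃ y : E, 2 * R (m + 1) ≤ dist y x ∧ dist y x ≤ 2 / 3 * R m := by
    intro m x
    have hRr : R m ≤ r := mul_le_of_le_one_right hr0.le (pow_le_one₀ (by positivity) (by linarith))
    obtain ⟨y, hyE, hy⟩ := hUP x x.2 (2 / 3 * R m) (by positivity) (by linarith)
    refine ⟨⟨y, hyE⟩, le_of_eq_of_le ?_ hy.1.le, hy.2.le⟩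
    simp only [R]; ring
  choose step hstep using hstep
  have htree := (isSeparatedTree_binaryTree ⟨a, ha⟩ hR hstep).comp_isometry isometry_subtype_coe
  have hq : (c / 3) ^ β = 1 / 2 := by
    have h3c : 3 / c ≠ 1 := ((one_lt_div hc0).2 (by linarith)).ne'
    rw [hβ, ← inv_div, Real.inv_rpow_log_div_log (by positivity) h3c two_pos, one_div]
  refine le_hausdorffContent_of_isSeparatedTree (hEcomp.inter_right isClosed_closedBall) htree hr0
    (by positivity) (by linarith) hq fun m v => ⟨(binaryTree _ step m v).2, ?_⟩
  simpa [R, binaryTree] using htree.dist_le v (Nat.zero_le m)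

theorem stmt_0 (n : ℕ) (hn : 2 ≤ n) (c : ℝ) (hc0 : 0 < c) (hc1 : c < 1)
    (E : Set (EuclideanSpace ℝ (Fin n))) (hEcomp : IsCompact E) (hEcard : E.Nontrivial)
    (hUP : ∀ a ∈ E, ∀ r : ℝ, 0 < r → r < Metric.diam E / 2 →
      ∃ x ∈ E, c * r < dist x a ∧ dist x a < r)
    (β : ℝ) (hβ : β = Real.log 2 / Real.log (3 / c))
    (a : EuclideanSpace ℝ (Fin n)) (ha : a ∈ E)
    (r : ℝ) (hr0 : 0 < r) (hr : r < Metric.diam E / 2) :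
    ENNReal.ofReal (r ^ β / (2 * 3 ^ n)) ≤
      hausdorffContent β (E ∩ Metric.closedBall a r) :=
  stmt_0_general n c hc0 hc1 E hEcomp hUP β hβ a ha r hr0 hr
end

section
/- Let n ≥ 2, let 0 < c < 1, and let E ⊆ ℝ^n be a compact set of class UP_n(c). Then the Hausdorff dimension of E is at least (log 2)/log(3/c). -/
/-!
Using uniform perfectness at the scales `r_k = (diam E / 4) (c/3)^k`, build a binary tree of
points of `E`: every node at level `k` has two children at distance between `c r_k` and `r_k`
from each other, and each is within `r_k` of the node. Following the binary digits of
`t ∈ [0, 1)` down the tree gives a Cauchy sequence, whose limit `F t ∈ E`. The tails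
`∑_{j > k} r_j` are small compared with `c r_k`, so if `s` and `t` differ in their first `k`
binary digits then `dist (F s) (F t) ≳ r_k`. Hence `|s - t| ≲ dist (F s) (F t) ^ d` with
`(c/3)^d = 1/2`, i.e. `F⁻¹` is `d`-Hölder on `F '' [0, 1)`, and Hölder maps of exponent `d` divide
Hausdorff dimension by at most `d`, so `d = dimH [0, 1) * d ≤ dimH E`.
-/

open Metric Set
open Filter Function Topology

theorem dimH_mul_le_dimH_image_of_dist_le_mul_rpow {X Y : Type*} [MetricSpace X] [MetricSpace Y]
    {f : X → Y} {s : Set X} {C d : ℝ}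
    (hd : 0 < d) (h : ∀ x ∈ s, ∀ y ∈ s, dist x y ≤ C * dist (f x) (f y) ^ d) :
    dimH s * ENNReal.ofReal d ≤ dimH (f '' s) := by
  rcases s.eq_empty_or_nonempty with rfl | ⟨x₀, -⟩
  · simp
  have : Nonempty X := ⟨x₀⟩
  have hinj : InjOn f s := fun x hx y hy hxy => by
    simpa [hxy, Real.zero_rpow hd.ne'] using h x hx y hy
  have hholder : HolderOnWith C.toNNReal d.toNNReal (invFunOn f s) (f '' s) := by
    rintro _ ⟨x, hx, rfl⟩ _ ⟨y, hy, rfl⟩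
    rw [hinj.leftInvOn_invFunOn hx, hinj.leftInvOn_invFunOn hy, edist_dist, edist_dist,
      Real.coe_toNNReal _ hd.le, ENNReal.ofReal_rpow_of_nonneg dist_nonneg hd.le]
    calc ENNReal.ofReal (dist x y) ≤ ENNReal.ofReal (C.toNNReal * dist (f x) (f y) ^ d) :=
          ENNReal.ofReal_le_ofReal <| (h x hx y hy).trans <|
            mul_le_mul_of_nonneg_right (Real.le_coe_toNNReal C) (by positivity)
      _ = _ := by rw [ENNReal.ofReal_mul C.toNNReal.coe_nonneg, ENNReal.ofReal_coe_nnreal]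
  have := hholder.dimH_image_le (Real.toNNReal_pos.2 hd)
  rwa [hinj.leftInvOn_invFunOn.image_image, ENNReal.le_div_iff_mul_le (by simp [hd])
    (by simp)] at this

theorem le_inv_rpow_mul_rpow_of_forall_lt_pow {ρ d a δ D : ℝ} (hρ0 : 0 < ρ) (hρ1 : ρ < 1)
    (hd : 0 < d) (ha : 0 < a) (hD : 0 ≤ D) (hδ : δ ≤ 1)
    (h : ∀ k : ℕ, D < a * ρ ^ k → δ ≤ (ρ ^ k) ^ d) : δ ≤ ((a * ρ) ^ d)⁻¹ * D ^ d := by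
  rcases hD.eq_or_lt with rfl | hD
  · rw [Real.zero_rpow hd.ne', mul_zero]
    have hlim : Tendsto (fun k : ℕ => (ρ ^ d) ^ k) atTop (𝓝 0) :=
      tendsto_pow_atTop_nhds_zero_of_lt_one (by positivity) (Real.rpow_lt_one hρ0.le hρ1 hd)
    refine ge_of_tendsto' hlim fun k => ?_
    rw [Real.rpow_pow_comm hρ0.le]
    exact h k (by positivity)
  rw [inv_mul_eq_div, ← Real.div_rpow hD.le (by positivity)]
  rcases le_or_gt (a * ρ) D with hlarge | hsmall
  · exact hδ.trans (Real.one_le_rpow ((one_le_div (by positivity)).2 hlarge) hd.le)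
  have hex : ∃ k : ℕ, a * ρ ^ k ≤ D := by
    obtain ⟨k, hk⟩ := exists_pow_lt_of_lt_one (div_pos hD ha) hρ1
    exact ⟨k, (lt_div_iff₀' ha).1 hk |>.le⟩
  obtain ⟨j, hj⟩ : ∃ j, Nat.find hex = j + 1 := by
    refine Nat.exists_eq_succ_of_ne_zero fun h0 => ?_
    have := Nat.find_spec hex
    rw [h0, pow_zero, mul_one] at this
    nlinarith
  have hupper : a * ρ ^ (j + 1) ≤ D := hj ▸ Nat.find_spec hex
  have hlower : D < a * ρ ^ j := not_le.1 (Nat.find_min hex (hj ▸ j.lt_succ_self))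
  calc δ ≤ (ρ ^ j) ^ d := h j hlower
    _ = (a * ρ ^ (j + 1) / (a * ρ)) ^ d := by rw [pow_succ]; field_simp
    _ ≤ (D / (a * ρ)) ^ d := by gcongr

theorem floor_mul_two_pow_succ_div_two (t : ℝ) (k : ℕ) :
    ⌊t * 2 ^ (k + 1)⌋₊ / 2 = ⌊t * 2 ^ k⌋₊ := by
  rw [← Nat.floor_div_ofNat, pow_succ, ← mul_assoc, mul_div_cancel_right₀ _ two_ne_zero]

theorem abs_sub_lt_of_floor_mul_two_pow_eq {s t : ℝ} (hs : 0 ≤ s) (ht : 0 ≤ t) {k : ℕ}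
    (h : ⌊s * 2 ^ k⌋₊ = ⌊t * 2 ^ k⌋₊) : |s - t| < (2 ^ k)⁻¹ := by
  have h2k : (0 : ℝ) < 2 ^ k := by positivity
  have := Int.abs_sub_lt_one_of_floor_eq_floor (a := s * 2 ^ k) (b := t * 2 ^ k) <| by
    rw [← Int.natCast_floor_eq_floor (mul_nonneg hs h2k.le),
      ← Int.natCast_floor_eq_floor (mul_nonneg ht h2k.le), h]
  rw [← sub_mul, abs_mul, abs_of_pos h2k, ← lt_div_iff₀ h2k] at this
  rwa [← one_div]

theorem exists_eq_and_succ_ne {α : Type*} {f g : ℕ → α} (h0 : f 0 = g 0) {k : ℕ}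
    (hk : f k ≠ g k) : ∃ j < k, f j = g j ∧ f (j + 1) ≠ g (j + 1) := by
  induction k with
  | zero => exact absurd h0 hk
  | succ k ih =>
    by_cases hfk : f k = g k
    · exact ⟨k, k.lt_succ_self, hfk, hk⟩
    · obtain ⟨j, hj, hj'⟩ := ih hfk
      exact ⟨j, hj.trans k.lt_succ_self, hj'⟩

section Tree

variable {X : Type*}

def dyadicTree (p₀ : X) (g : ℕ → X → X) : ℕ → ℕ → X
  | 0, _ => p₀
  | k + 1, m => if m % 2 = 0 then dyadicTree p₀ g k (m / 2) else g k (dyadicTree p₀ g k (m / 2))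

theorem dyadicTree_mem {E : Set X} {p₀ : X} {g : ℕ → X → X} (hp₀ : p₀ ∈ E)
    (hg : ∀ k, ∀ p ∈ E, g k p ∈ E) (k m : ℕ) : dyadicTree p₀ g k m ∈ E := by
  induction k generalizing m with
  | zero => exact hp₀
  | succ k ih =>
    simp only [dyadicTree]
    split_ifs
    exacts [ih _, hg k _ (ih _)]

variable [MetricSpace X]

def UniformlyPerfect (c : ℝ) (E : Set X) : Prop :=
  ∀ a ∈ E, ∀ r : ℝ, 0 < r → r < Metric.diam E / 2 → ∃ x ∈ E, c * r < dist x a ∧ dist x a < r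

/-- `x k m` is the `m`-th node at level `k`; its children are `x (k + 1) (2 * m)` and
`x (k + 1) (2 * m + 1)`. -/
structure IsDyadicTree (x : ℕ → ℕ → X) (r : ℕ → ℝ) (c : ℝ) : Prop where
  dist_le : ∀ k m, dist (x (k + 1) m) (x k (m / 2)) ≤ r k
  le_dist_sibling : ∀ k m m', m / 2 = m' / 2 → m ≠ m' →
    c * r k ≤ dist (x (k + 1) m) (x (k + 1) m')

theorem isDyadicTree_dyadicTree {E : Set X} {p₀ : X} {g : ℕ → X → X} {r : ℕ → ℝ} {c : ℝ}
    (hp₀ : p₀ ∈ E) (hr : ∀ k, 0 ≤ r k) (hgE : ∀ k, ∀ p ∈ E, g k p ∈ E)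
    (hg : ∀ k, ∀ p ∈ E, c * r k ≤ dist (g k p) p ∧ dist (g k p) p ≤ r k) :
    IsDyadicTree (dyadicTree p₀ g) r c where
  dist_le k m := by
    simp only [dyadicTree]
    split_ifs
    exacts [(dist_self _).trans_le (hr k), (hg k _ (dyadicTree_mem hp₀ hgE k _)).2]
  le_dist_sibling k m m' hmm' hne := by
    have hg' := (hg k _ (dyadicTree_mem hp₀ hgE k (m / 2))).1
    rcases Nat.mod_two_eq_zero_or_one m with hm | hm <;>
      rcases Nat.mod_two_eq_zero_or_one m' with hm' | hm'
    · omega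
    · simpa only [dyadicTree, hm, hm', ← hmm', if_true, one_ne_zero, if_false, dist_comm]
        using hg'
    · simpa only [dyadicTree, hm, hm', ← hmm', if_true, one_ne_zero, if_false] using hg'
    · omega

theorem UniformlyPerfect.exists_isDyadicTree {E : Set X} {c : ℝ} {p₀ : X} {r : ℕ → ℝ}
    (hE : UniformlyPerfect c E) (hp₀ : p₀ ∈ E) (hr : ∀ k, 0 < r k ∧ r k < diam E / 2) :
    ∃ x : ℕ → ℕ → X, (∀ k m, x k m ∈ E) ∧ IsDyadicTree x r c := by
  have : ∀ k p, ∃ q, p ∈ E → q ∈ E ∧ c * r k ≤ dist q p ∧ dist q p ≤ r k := by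
    intro k p
    by_cases hp : p ∈ E
    · obtain ⟨q, hq, hcq, hqr⟩ := hE p hp (r k) (hr k).1 (hr k).2
      exact ⟨q, fun _ => ⟨hq, hcq.le, hqr.le⟩⟩
    · exact ⟨p, fun h => absurd h hp⟩
  choose g hg using this
  have hgE : ∀ k, ∀ p ∈ E, g k p ∈ E := fun k p hp => (hg k p hp).1
  exact ⟨dyadicTree p₀ g, dyadicTree_mem hp₀ hgE,
    isDyadicTree_dyadicTree hp₀ (fun k => (hr k).1.le) hgE fun k p hp => (hg k p hp).2⟩

namespace IsDyadicTree

variable {x : ℕ → ℕ → X} {R ρ c : ℝ}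

/-- `⌊t * 2 ^ k⌋₊` encodes the first `k` binary digits of `t ∈ [0, 1)`, so `F t` is the end of the
branch of the tree that they describe. -/
theorem exists_limit {E : Set X} (hx : IsDyadicTree x (fun k => R * ρ ^ k) c)
    (hE : IsComplete E) (hxE : ∀ k m, x k m ∈ E) (hρ : ρ < 1) :
    ∃ F : ℝ → X, (∀ t, F t ∈ E) ∧
      ∀ t k, dist (x k ⌊t * 2 ^ k⌋₊) (F t) ≤ R * ρ ^ k / (1 - ρ) := by
  have hstep (t : ℝ) (k : ℕ) :
      dist (x k ⌊t * 2 ^ k⌋₊) (x (k + 1) ⌊t * 2 ^ (k + 1)⌋₊) ≤ R * ρ ^ k := by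
    have := hx.dist_le k ⌊t * 2 ^ (k + 1)⌋₊
    rwa [floor_mul_two_pow_succ_div_two, dist_comm] at this
  have : ∀ t : ℝ, ∃ y ∈ E, Tendsto (fun k => x k ⌊t * 2 ^ k⌋₊) atTop (𝓝 y) := fun t =>
    cauchySeq_tendsto_of_isComplete hE (fun k => hxE _ _)
      (cauchySeq_of_le_geometric ρ R hρ (hstep t))
  choose F hFE hF using this
  exact ⟨F, hFE, fun t k => dist_le_of_le_geometric_of_tendsto ρ R hρ (hstep t) (hF t) k⟩

variable {F : ℝ → X}

theorem le_dist_of_floor_ne (hx : IsDyadicTree x (fun k => R * ρ ^ k) c)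
    (hF : ∀ t k, dist (x k ⌊t * 2 ^ k⌋₊) (F t) ≤ R * ρ ^ k / (1 - ρ))
    (hR : 0 ≤ R) (hρ0 : 0 ≤ ρ) (hρ1 : ρ < 1) (hκ : 0 ≤ c - 2 * ρ / (1 - ρ))
    {s t : ℝ} (hs : s ∈ Ico 0 1) (ht : t ∈ Ico 0 1) {k : ℕ}
    (hk : ⌊s * 2 ^ k⌋₊ ≠ ⌊t * 2 ^ k⌋₊) :
    (c - 2 * ρ / (1 - ρ)) * (R * ρ ^ k) ≤ dist (F s) (F t) := by
  have h0 : ⌊s * 2 ^ 0⌋₊ = ⌊t * 2 ^ 0⌋₊ := by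
    simp only [pow_zero, mul_one, Nat.floor_eq_zero.2 hs.2, Nat.floor_eq_zero.2 ht.2]
  obtain ⟨j, hjk, hj, hj'⟩ := exists_eq_and_succ_ne (f := fun k => ⌊s * 2 ^ k⌋₊)
    (g := fun k => ⌊t * 2 ^ k⌋₊) h0 hk
  have hsib := hx.le_dist_sibling j _ _
    (by simp only [floor_mul_two_pow_succ_div_two]; exact hj) hj'
  have htri := dist_triangle4 (x (j + 1) ⌊s * 2 ^ (j + 1)⌋₊) (F s) (F t)
    (x (j + 1) ⌊t * 2 ^ (j + 1)⌋₊)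
  rw [dist_comm (F t)] at htri
  have hρ : 0 < 1 - ρ := by linarith
  calc (c - 2 * ρ / (1 - ρ)) * (R * ρ ^ k) ≤ (c - 2 * ρ / (1 - ρ)) * (R * ρ ^ j) :=
        mul_le_mul_of_nonneg_left
          (mul_le_mul_of_nonneg_left (pow_le_pow_of_le_one hρ0 hρ1.le hjk.le) hR) hκ
    _ = c * (R * ρ ^ j) - 2 * (R * ρ ^ (j + 1) / (1 - ρ)) := by
        field_simp
        ring
    _ ≤ dist (F s) (F t) := by linarith [hF s (j + 1), hF t (j + 1)]

theorem dist_le_rpow (hx : IsDyadicTree x (fun k => R * ρ ^ k) c)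
    (hF : ∀ t k, dist (x k ⌊t * 2 ^ k⌋₊) (F t) ≤ R * ρ ^ k / (1 - ρ))
    (hR : 0 < R) (hρ0 : 0 < ρ) (hρ1 : ρ < 1) (hκ : 0 < c - 2 * ρ / (1 - ρ))
    {d : ℝ} (hd0 : 0 < d) (hd : ρ ^ d = 2⁻¹) {s t : ℝ} (hs : s ∈ Ico 0 1) (ht : t ∈ Ico 0 1) :
    dist s t ≤ (((c - 2 * ρ / (1 - ρ)) * R * ρ) ^ d)⁻¹ * dist (F s) (F t) ^ d := by
  refine le_inv_rpow_mul_rpow_of_forall_lt_pow hρ0 hρ1 hd0 (by positivity) dist_nonneg ?_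
    fun k hk => ?_
  · rw [Real.dist_eq, abs_sub_le_iff]
    constructor <;> linarith [hs.1, hs.2, ht.1, ht.2]
  · have hfloor : ⌊s * 2 ^ k⌋₊ = ⌊t * 2 ^ k⌋₊ := by
      by_contra hne
      have := hx.le_dist_of_floor_ne hF hR.le hρ0.le hρ1 hκ.le hs ht hne
      linarith
    rw [← Real.rpow_pow_comm hρ0.le, hd, inv_pow, Real.dist_eq]
    exact (abs_sub_lt_of_floor_mul_two_pow_eq hs.1 ht.1 hfloor).le

end IsDyadicTree

theorem Real.rpow_log_two_div_log_inv {ρ : ℝ} (hρ0 : 0 < ρ) (hρ1 : ρ < 1) :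
    ρ ^ (Real.log 2 / Real.log ρ⁻¹) = 2⁻¹ := by
  have hlog : Real.log ρ ≠ 0 := (Real.log_neg hρ0 hρ1).ne
  rw [Real.rpow_def_of_pos hρ0, Real.log_inv, mul_div, mul_comm, mul_div_assoc, div_neg,
    div_self hlog, mul_neg_one, Real.exp_neg, Real.exp_log two_pos]

theorem UniformlyPerfect.ofReal_log_two_div_log_le_dimH {E : Set X} {c : ℝ}
    (hUP : UniformlyPerfect c E) (hc0 : 0 < c) (hc1 : c < 1) (hE : IsCompact E)
    (hEnt : E.Nontrivial) :
    ENNReal.ofReal (Real.log 2 / Real.log (3 / c)) ≤ dimH E := by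
  obtain ⟨p₀, hp₀, q₀, hq₀, hpq⟩ := hEnt
  set ρ := c / 3 with hρ
  set R := diam E / 4 with hRdef
  have hR : 0 < R := by
    have := (dist_pos.2 hpq).trans_le (dist_le_diam_of_mem hE.isBounded hp₀ hq₀)
    positivity
  have hρ0 : 0 < ρ := by positivity
  have hρ1 : ρ < 1 := by rw [hρ]; linarith
  have hr k : 0 < R * ρ ^ k ∧ R * ρ ^ k < diam E / 2 :=
    ⟨by positivity, by nlinarith [pow_le_one₀ hρ0.le hρ1.le (n := k)]⟩
  obtain ⟨x, hxE, hx⟩ := hUP.exists_isDyadicTree hp₀ hr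
  obtain ⟨F, hFE, hF⟩ := hx.exists_limit hE.isComplete hxE hρ1
  have hκ : 0 < c - 2 * ρ / (1 - ρ) := by
    rw [show c - 2 * ρ / (1 - ρ) = c * (1 - c) / (3 - c) by
      rw [hρ]; field_simp [show (3 : ℝ) - c ≠ 0 by linarith]; ring]
    exact div_pos (mul_pos hc0 (by linarith)) (by linarith)
  have hd : ρ ^ (Real.log 2 / Real.log (3 / c)) = 2⁻¹ := by
    rw [← inv_div c 3]
    exact Real.rpow_log_two_div_log_inv hρ0 hρ1
  have hd0 : 0 < Real.log 2 / Real.log (3 / c) :=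
    div_pos (Real.log_pos one_lt_two) (Real.log_pos (by rw [lt_div_iff₀ hc0]; linarith))
  calc ENNReal.ofReal (Real.log 2 / Real.log (3 / c))
      = dimH (Ico (0 : ℝ) 1) * ENNReal.ofReal (Real.log 2 / Real.log (3 / c)) := by
        rw [Real.dimH_of_nonempty_interior (by simp), Module.finrank_self, Nat.cast_one, one_mul]
    _ ≤ dimH (F '' Ico 0 1) := dimH_mul_le_dimH_image_of_dist_le_mul_rpow hd0
        fun s hs t ht => hx.dist_le_rpow hF hR hρ0 hρ1 hκ hd0 hd hs ht
    _ ≤ dimH E := dimH_mono (image_subset_iff.2 fun t _ => hFE t)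

end Tree

theorem stmt_1_general (n : ℕ) (c : ℝ) (hc0 : 0 < c) (hc1 : c < 1)
    (E : Set (EuclideanSpace ℝ (Fin n))) (hEcomp : IsCompact E) (hEcard : E.Nontrivial)
    (hUP : ∀ a ∈ E, ∀ r : ℝ, 0 < r → r < Metric.diam E / 2 →
      ∃ x ∈ E, c * r < dist x a ∧ dist x a < r) :
    ENNReal.ofReal (Real.log 2 / Real.log (3 / c)) ≤ dimH E :=
  UniformlyPerfect.ofReal_log_two_div_log_le_dimH hUP hc0 hc1 hEcomp hEcard

theorem stmt_1 (n : ℕ) (hn : 2 ≤ n) (c : ℝ) (hc0 : 0 < c) (hc1 : c < 1)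
    (E : Set (EuclideanSpace ℝ (Fin n))) (hEcomp : IsCompact E) (hEcard : E.Nontrivial)
    (hUP : ∀ a ∈ E, ∀ r : ℝ, 0 < r → r < Metric.diam E / 2 →
      ∃ x ∈ E, c * r < dist x a ∧ dist x a < r) :
    ENNReal.ofReal (Real.log 2 / Real.log (3 / c)) ≤ dimH E :=
  stmt_1_general n c hc0 hc1 E hEcomp hEcard hUP
end

section
/- Let n ≥ 2, let σ be a finite positive Borel measure on ℝ^n, and let h be a measure function. Let T be the set of those points x ∈ ℝ^n for which σ(B(x, r)) ≤ h(r) holds for all r > 0. Then there exists a constant N, depending only on n, such that Λ_h(ℝ^n \ T) ≤ N·σ(ℝ^n). -/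
/-!
Every `x ∉ T` has a radius `rₓ > 0` with `h rₓ < σ (B(x, rₓ))`. Since `σ` is finite and
`h → ∞`, these radii are bounded, so the Besicovitch covering theorem extracts a countable
subcover of `Tᶜ` splitting into `N` families of disjoint balls, `N` depending only on the
dimension. Hence `Λ_h(Tᶜ) ≤ ∑ h rₓ ≤ ∑ σ (B(x, rₓ)) ≤ N σ(ℝⁿ)`.
-/

open Metric Set MeasureTheory ENNReal

/-- A measure function: a monotone increasing continuous function on `(0, ∞)` tending
to `0` at `0` and to `+∞` at `+∞`. -/
def IsMeasureFunction (h : ℝ → ℝ) : Prop :=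
  MonotoneOn h (Set.Ioi 0) ∧ ContinuousOn h (Set.Ioi 0) ∧
    Filter.Tendsto h (nhdsWithin 0 (Set.Ioi 0)) (nhds 0) ∧
    Filter.Tendsto h Filter.atTop Filter.atTop

/-- The `h`-Hausdorff content `Λ_h(A)`: the infimum of `∑ h(rₖ)` over all countable covers
of `A` by open balls `B(aₖ, rₖ)`. -/
noncomputable def hausdorffHContent {n : ℕ} (h : ℝ → ℝ)
    (A : Set (EuclideanSpace ℝ (Fin n))) : ℝ≥0∞ :=
  ⨅ (c : ℕ → EuclideanSpace ℝ (Fin n)) (r : ℕ → ℝ) (_ : ∀ k, 0 < r k)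
    (_ : A ⊆ ⋃ k, Metric.ball (c k) (r k)), ∑' k, ENNReal.ofReal (h (r k))

open Filter Topology

lemma hausdorffHContent_le_tsum_of_infinite {n : ℕ} (h : ℝ → ℝ)
    (A : Set (EuclideanSpace ℝ (Fin n))) {ι : Type*} [Countable ι] [Infinite ι]
    (c : ι → EuclideanSpace ℝ (Fin n)) (r : ι → ℝ) (hr : ∀ i, 0 < r i)
    (hA : A ⊆ ⋃ i, ball (c i) (r i)) :
    hausdorffHContent h A ≤ ∑' i, ENNReal.ofReal (h (r i)) := by
  obtain ⟨e⟩ : Nonempty (ℕ ≃ ι) := nonempty_equiv_of_countable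
  calc hausdorffHContent h A ≤ ∑' k, ENNReal.ofReal (h (r (e k))) :=
        iInf₂_le_of_le (fun k => c (e k)) (fun k => r (e k)) <|
          iInf₂_le (fun k => hr (e k))
            (by rwa [e.surjective.iUnion_comp fun i => ball (c i) (r i)])
    _ = ∑' i, ENNReal.ofReal (h (r i)) := e.tsum_eq fun i => ENNReal.ofReal (h (r i))

/-- Pad the cover to an infinite one by balls whose `h`-values have arbitrarily small total. -/
lemma hausdorffHContent_le_tsum {n : ℕ} {h : ℝ → ℝ} (hzero : Tendsto h (𝓝[>] 0) (𝓝 0))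
    (A : Set (EuclideanSpace ℝ (Fin n))) {ι : Type*} [Countable ι]
    (c : ι → EuclideanSpace ℝ (Fin n)) (r : ι → ℝ) (hr : ∀ i, 0 < r i)
    (hA : A ⊆ ⋃ i, ball (c i) (r i)) :
    hausdorffHContent h A ≤ ∑' i, ENNReal.ofReal (h (r i)) := by
  refine ENNReal.le_of_forall_pos_le_add fun ε hε _ => ?_
  obtain ⟨δ, hδpos, hδsum⟩ := ENNReal.exists_pos_sum_of_countable (coe_ne_zero.2 hε.ne') ℕ
  have hsmall : ∀ k, ∃ ρ, 0 < ρ ∧ h ρ < δ k := fun k =>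
    ((hzero.eventually_lt_const (NNReal.coe_pos.2 (hδpos k))).and
      self_mem_nhdsWithin).exists.imp fun _ hρ => ⟨hρ.2, hρ.1⟩
  choose ρ hρpos hρδ using hsmall
  have hcover : A ⊆ ⋃ j, ball (Sum.elim c (fun _ => 0) j) (Sum.elim r ρ j) := by
    rw [iUnion_sum]
    exact hA.trans subset_union_left
  calc hausdorffHContent h A ≤ ∑' j, ENNReal.ofReal (h (Sum.elim r ρ j)) :=
        hausdorffHContent_le_tsum_of_infinite h A _ _ (Sum.forall.2 ⟨hr, hρpos⟩) hcover
    _ = ∑' i, ENNReal.ofReal (h (r i)) + ∑' k, ENNReal.ofReal (h (ρ k)) :=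
        ENNReal.summable.tsum_sum ENNReal.summable
    _ ≤ ∑' i, ENNReal.ofReal (h (r i)) + ε := by
        gcongr
        refine (ENNReal.tsum_le_tsum fun k => ?_).trans hδsum.le
        exact (ENNReal.ofReal_le_ofReal (hρδ k).le).trans_eq ENNReal.ofReal_coe_nnreal

theorem Besicovitch.exists_countable_subcover_tsum_measure_ball_le (α : Type*) [MetricSpace α]
    [TopologicalSpace.SeparableSpace α] [MeasurableSpace α] [OpensMeasurableSpace α]
    [HasBesicovitchCovering α] :
    ∃ N : ℕ, ∀ (μ : Measure α) {ι : Type*} (c : ι → α) (r : ι → ℝ), (∀ i, 0 < r i) →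
      BddAbove (range r) → ∃ t : Set ι, t.Countable ∧ range c ⊆ ⋃ i ∈ t, ball (c i) (r i) ∧
        ∑' i : t, μ (ball (c i) (r i)) ≤ N * μ univ := by
  obtain ⟨N, τ, hτ, hN⟩ := HasBesicovitchCovering.no_satelliteConfig (α := α)
  refine ⟨N, fun μ ι c r hr ⟨R, hR⟩ => ?_⟩
  let p : BallPackage ι α := ⟨c, r, hr, R, fun i => hR (mem_range_self i)⟩
  obtain ⟨s, hdisj, hcov⟩ := exist_disjoint_covering_families hτ hN p
  have hdisj' : ∀ k, (s k).PairwiseDisjoint fun i => ball (c i) (r i) := fun k =>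
    (hdisj k).mono fun i => ball_subset_closedBall
  refine ⟨⋃ k, s k, countable_iUnion fun k => (hdisj' k).countable_of_nonempty_interior
    fun i _ => by rw [isOpen_ball.interior_eq]; exact nonempty_ball.2 (hr i), ?_, ?_⟩
  · rwa [biUnion_iUnion]
  calc ∑' i : ⋃ k, s k, μ (ball (c i) (r i))
      ≤ ∑ k, ∑' i : s k, μ (ball (c i) (r i)) :=
        ENNReal.tsum_iUnion_le (fun i => μ (ball (c i) (r i))) s
    _ ≤ ∑ _k : Fin N, μ univ := Finset.sum_le_sum fun k _ =>
        tsum_measure_le_measure_univ (fun _ => measurableSet_ball.nullMeasurableSet)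
          fun i j hij => (hdisj' k i.2 j.2 (Subtype.coe_ne_coe.2 hij)).aedisjoint
    _ = N * μ univ := by simp

lemma bddAbove_range_of_ofReal_comp_lt {h : ℝ → ℝ} (hh : Tendsto h atTop atTop) {ι : Type*}
    {r : ι → ℝ} {C : ℝ≥0∞} (hC : C ≠ ∞) (hr : ∀ i, ENNReal.ofReal (h (r i)) < C) :
    BddAbove (range r) := by
  obtain ⟨R, hR⟩ := (hh.eventually_ge_atTop C.toReal).exists_forall_of_atTop
  refine ⟨R, forall_mem_range.2 fun i => ?_⟩
  by_contra! hi
  have hCle := hR _ hi.le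
  exact (hr i).not_ge ((le_ofReal_iff_toReal_le hC (toReal_nonneg.trans hCle)).2 hCle)

theorem stmt_8_general (n : ℕ) :
    ∃ N : ℕ, 0 < N ∧
      ∀ (σ : Measure (EuclideanSpace ℝ (Fin n))), IsFiniteMeasure σ →
      ∀ h : ℝ → ℝ, IsMeasureFunction h →
      ∀ T : Set (EuclideanSpace ℝ (Fin n)),
        T = {x | ∀ r : ℝ, 0 < r → σ (Metric.ball x r) ≤ ENNReal.ofReal (h r)} →
        hausdorffHContent h Tᶜ ≤ (N : ℝ≥0∞) * σ Set.univ := by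
  obtain ⟨N, hN⟩ :=
    Besicovitch.exists_countable_subcover_tsum_measure_ball_le (EuclideanSpace ℝ (Fin n))
  refine ⟨N + 1, N.succ_pos, fun σ _ h hh T hT => ?_⟩
  have hbad : ∀ x : ↥Tᶜ, ∃ ρ, 0 < ρ ∧ ENNReal.ofReal (h ρ) < σ (ball (x : _) ρ) := by
    rintro ⟨x, hx⟩
    simpa [hT] using hx
  choose ρ hρpos hρ using hbad
  obtain ⟨t, ht, hcov, hsum⟩ := hN σ Subtype.val ρ hρpos <|
    bddAbove_range_of_ofReal_comp_lt hh.2.2.2 (measure_ne_top σ univ) fun x =>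
      (hρ x).trans_le (measure_mono (subset_univ _))
  have : Countable t := ht.to_subtype
  rw [Subtype.range_coe, biUnion_eq_iUnion] at hcov
  calc hausdorffHContent h Tᶜ ≤ ∑' x : t, ENNReal.ofReal (h (ρ x)) :=
        hausdorffHContent_le_tsum hh.2.2.1 _ _ _ (fun x => hρpos x) hcov
    _ ≤ ∑' x : t, σ (ball (x : _) (ρ x)) := ENNReal.tsum_le_tsum fun x => (hρ x).le
    _ ≤ N * σ univ := hsum
    _ ≤ (N + 1 : ℕ) * σ univ := by gcongr; exact_mod_cast N.le_succ

theorem stmt_8 (n : ℕ) (hn : 2 ≤ n) :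
    ∃ N : ℕ, 0 < N ∧
      ∀ (σ : Measure (EuclideanSpace ℝ (Fin n))), IsFiniteMeasure σ →
      ∀ h : ℝ → ℝ, IsMeasureFunction h →
      ∀ T : Set (EuclideanSpace ℝ (Fin n)),
        T = {x | ∀ r : ℝ, 0 < r → σ (Metric.ball x r) ≤ ENNReal.ofReal (h r)} →
        hausdorffHContent h Tᶜ ≤ (N : ℝ≥0∞) * σ Set.univ :=
  stmt_8_general n
end

section
/- Let n ≥ 2, let p ≥ 1 be an integer with index set I = {1, 2, …, p}, let 0 < c < 1 and r > 0. Suppose that closed balls B_{i₁i₂…i_k} = B̄(a_{i₁i₂…i_k}, c^k·r), indexed by finite words i₁, …, i_k ∈ I for k = 1, 2, 3, …, satisfy: (i) B_{i₁…i_{k−1}i} ∩ B_{i₁…i_{k−1}j} = ∅ for i ≠ j in I; and (ii) B_{i₁…i_k} ⊆ B_{i₁…i_{k−1}} for all i₁, …, i_k ∈ I. Then the compact set K = ∩_{k=1}^∞ ∪_{(i₁,…,i_k)∈I^k} B_{i₁i₂…i_k} satisfies Λ^β(K) ≥ r^β/(p·3^n), where β = −(log p)/(log c), and the Hausdorff dimension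 of K equals β. -/
open Metric Set ENNReal

open MeasureTheory Filter Module Topology

/-!
Give each of the `p ^ m` balls of level `m` the mass `p ^ (-m)`. A closed ball `D` of radius
`ρ` with `c ^ (j + 1) r < ρ ≤ c ^ j r` meets at most `3 ^ n` balls of level `j`: they are
disjoint balls of radius `c ^ j r` inside the ball of radius `3 c ^ j r` concentric with `D`,
so volume comparison applies. Hence `D` meets at most `3 ^ n p ^ (m - j)` balls of level
`m ≥ j`, and since `p ^ (-(j + 1)) = c ^ ((j + 1) β) < (ρ / r) ^ β` its mass is at most
`p 3 ^ n (ρ / r) ^ β`. A cover of the compact set `K` by balls may be taken finite, and at a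
level `m` finer than all of its balls it must carry the total mass `1`; this is the lower bound
on the content.

The content bounds `μH[β] K` from below, while the `p ^ k` balls of level `k` cover `K` with
`∑ diam ^ β ≤ (2 r) ^ β`; so `0 < μH[β] K < ∞` and `dimH K = β`.
-/

section BallPacking

variable {E : Type*} [NormedAddCommGroup E] [NormedSpace ℝ E] [FiniteDimensional ℝ E]
  [MeasurableSpace E] [BorelSpace E]

theorem card_mul_pow_le_of_pairwiseDisjoint_closedBall {ι : Type*} (S : Finset ι) (y : ι → E)
    (x : E) {s R : ℝ} (hs : 0 < s) (hR : 0 ≤ R)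
    (hdisj : (S : Set ι).PairwiseDisjoint fun i => closedBall (y i) s)
    (hsub : ∀ i ∈ S, closedBall (y i) s ⊆ closedBall x R) :
    (S.card : ℝ) * s ^ finrank ℝ E ≤ R ^ finrank ℝ E := by
  set μ : Measure E := Measure.addHaar
  have hvol : ENNReal.ofReal (S.card * s ^ finrank ℝ E) * μ (ball 0 1)
      ≤ ENNReal.ofReal (R ^ finrank ℝ E) * μ (ball 0 1) :=
    calc ENNReal.ofReal (S.card * s ^ finrank ℝ E) * μ (ball 0 1)
        = ∑ i ∈ S, μ (closedBall (y i) s) := by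
          simp only [Measure.addHaar_closedBall μ _ hs.le, Finset.sum_const, nsmul_eq_mul]
          rw [ENNReal.ofReal_mul (by positivity), ENNReal.ofReal_natCast, mul_assoc]
      _ = μ (⋃ i ∈ S, closedBall (y i) s) :=
          (measure_biUnion_finset hdisj fun i _ => measurableSet_closedBall).symm
      _ ≤ μ (closedBall x R) := measure_mono (iUnion₂_subset hsub)
      _ = ENNReal.ofReal (R ^ finrank ℝ E) * μ (ball 0 1) := Measure.addHaar_closedBall μ x hR
  rwa [ENNReal.mul_le_mul_iff_left (measure_ball_pos μ 0 one_pos).ne' measure_ball_lt_top.ne,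
    ENNReal.ofReal_le_ofReal_iff (by positivity)] at hvol

end BallPacking

theorem encard_setOf_length_eq (α : Type*) [Fintype α] (m : ℕ) :
    {l : List α | l.length = m}.encard = Fintype.card α ^ m := by
  change ENat.card (List.Vector α m) = _
  simp

theorem ncard_setOf_length_eq (α : Type*) [Fintype α] (m : ℕ) :
    {l : List α | l.length = m}.ncard = Fintype.card α ^ m := by
  rw [Set.ncard_def, encard_setOf_length_eq, ← Nat.cast_pow, ENat.toNat_natCast]

section CantorTree

variable {X : Type*} {p : ℕ} (B : List (Fin p) → Set X)

def limitSet : Set X := ⋂ k : ℕ, ⋃ (l : List (Fin p)) (_ : l.length = k + 1), B l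

def ChildrenNested : Prop := ∀ (l : List (Fin p)) (i : Fin p), l ≠ [] → B (l ++ [i]) ⊆ B l

def ChildrenDisjoint : Prop :=
  ∀ (l : List (Fin p)) (i j : Fin p), i ≠ j → Disjoint (B (l ++ [i])) (B (l ++ [j]))

def wordsMeeting (D : Set X) (m : ℕ) : Set (List (Fin p)) :=
  {l | l.length = m ∧ (B l ∩ D).Nonempty}

theorem finite_wordsMeeting (D : Set X) (m : ℕ) : (wordsMeeting B D m).Finite :=
  (List.finite_length_eq (Fin p) m).subset fun _ hl => hl.1

variable {B}

theorem ChildrenDisjoint.disjoint_of_length_eq (hdisj : ChildrenDisjoint B)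
    (hnest : ChildrenNested B) {u v : List (Fin p)} (hlen : u.length = v.length) (huv : u ≠ v) :
    Disjoint (B u) (B v) := by
  induction u using List.reverseRecOn generalizing v with
  | nil => exact absurd (List.length_eq_zero_iff.mp hlen.symm).symm huv
  | append_singleton u i ih =>
    obtain ⟨v, j, rfl⟩ : ∃ v' j, v = v' ++ [j] := by
      rcases List.eq_nil_or_concat v with rfl | ⟨v', j, rfl⟩
      · simp at hlen
      · exact ⟨v', j, List.concat_eq_append ..⟩
    have hlen' : u.length = v.length := by simpa using hlen
    by_cases h : u = v
    · subst h
      exact hdisj u i j fun hij => huv (by rw [hij])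
    · have hu : u ≠ [] := by rintro rfl; exact h (List.length_eq_zero_iff.mp hlen'.symm).symm
      have hv : v ≠ [] := by rintro rfl; exact hu (List.length_eq_zero_iff.mp hlen')
      exact (ih hlen' h).mono (hnest u i hu) (hnest v j hv)

theorem isCompact_limitSet [TopologicalSpace X] [T2Space X] (hB : ∀ l, IsCompact (B l)) :
    IsCompact (limitSet B) := by
  have hlevel : ∀ k, IsCompact (⋃ (l : List (Fin p)) (_ : l.length = k + 1), B l) :=
    fun k => (List.finite_length_eq (Fin p) (k + 1)).isCompact_biUnion fun l _ => hB l
  exact (hlevel 0).of_isClosed_subset (isClosed_iInter fun k => (hlevel k).isClosed)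
    (iInter_subset _ 0)

theorem inter_limitSet_nonempty [TopologicalSpace X] [T2Space X] (hB : ∀ l, IsCompact (B l))
    (hne : ∀ l, (B l).Nonempty) (hnest : ChildrenNested B) {l : List (Fin p)} (hl : l ≠ []) :
    (B l ∩ limitSet B).Nonempty := by
  set σ : ℕ → Fin p := fun i => l.getD i (l.head hl)
  have hprefix : ∀ k, (List.range (k + 1)).map σ ≠ [] := by simp
  have hsucc : ∀ k, B ((List.range (k + 2)).map σ) ⊆ B ((List.range (k + 1)).map σ) := by
    intro k
    rw [List.range_succ, List.map_append]
    exact hnest _ _ (hprefix k)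
  obtain ⟨x, hx⟩ := IsCompact.nonempty_iInter_of_sequence_nonempty_isCompact_isClosed
    (fun k => B ((List.range (k + 1)).map σ)) hsucc (fun k => hne _) (hB _)
    (fun k => (hB _).isClosed)
  rw [mem_iInter] at hx
  have hl' : (List.range l.length).map σ = l := by
    apply List.ext_getElem (by simp)
    intro i _ hi
    simp [σ, List.getElem?_eq_getElem hi]
  obtain ⟨m, hm⟩ : ∃ m, l.length = m + 1 := Nat.exists_eq_succ_of_ne_zero (by simpa using hl)
  refine ⟨x, ?_, mem_iInter.mpr fun k => mem_iUnion₂.mpr ⟨_, by simp, hx k⟩⟩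
  simpa only [← hm, hl'] using hx m

theorem ncard_wordsMeeting_le (D : Set X) (m : ℕ) : (wordsMeeting B D m).ncard ≤ p ^ m := by
  calc (wordsMeeting B D m).ncard ≤ {l : List (Fin p) | l.length = m}.ncard :=
        Set.ncard_le_ncard (fun _ hl => hl.1) (List.finite_length_eq _ m)
    _ = p ^ m := by simp [ncard_setOf_length_eq]

theorem ncard_wordsMeeting_succ_le (hnest : ChildrenNested B) (D : Set X) {m : ℕ} (hm : m ≠ 0) :
    (wordsMeeting B D (m + 1)).ncard ≤ p * (wordsMeeting B D m).ncard := by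
  have hsub : wordsMeeting B D (m + 1) ⊆
      (fun w : List (Fin p) × Fin p => w.1 ++ [w.2]) '' (wordsMeeting B D m ×ˢ univ) := by
    rintro l ⟨hlen, hmeet⟩
    have hl : l ≠ [] := by rintro rfl; simp at hlen
    have hparent : l.dropLast ≠ [] := by
      rw [← List.length_pos_iff, List.length_dropLast, hlen]; omega
    have hsplit := List.dropLast_append_getLast hl
    refine ⟨(l.dropLast, l.getLast hl), ⟨⟨by simp [hlen], ?_⟩, mem_univ _⟩, hsplit⟩
    rw [← hsplit] at hmeet
    exact hmeet.mono (inter_subset_inter_left _ (hnest _ _ hparent))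
  have hfin := (finite_wordsMeeting B D m).prod (Set.finite_univ (α := Fin p))
  calc (wordsMeeting B D (m + 1)).ncard
      ≤ (wordsMeeting B D m ×ˢ (univ : Set (Fin p))).ncard :=
        (Set.ncard_le_ncard hsub (hfin.image _)).trans (Set.ncard_image_le hfin)
    _ = p * (wordsMeeting B D m).ncard := by simp [Set.ncard_prod, mul_comm]

theorem ncard_wordsMeeting_add_le (hnest : ChildrenNested B) (D : Set X) {m : ℕ} (hm : m ≠ 0)
    (d : ℕ) : (wordsMeeting B D (m + d)).ncard ≤ p ^ d * (wordsMeeting B D m).ncard := by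
  induction d with
  | zero => simp
  | succ d ih =>
    calc (wordsMeeting B D (m + d + 1)).ncard ≤ p * (wordsMeeting B D (m + d)).ncard :=
          ncard_wordsMeeting_succ_le hnest D (by omega)
      _ ≤ p * (p ^ d * (wordsMeeting B D m).ncard) := Nat.mul_le_mul_left p ih
      _ = p ^ (d + 1) * (wordsMeeting B D m).ncard := by ring

theorem pow_le_sum_ncard_wordsMeeting [TopologicalSpace X] [T2Space X]
    (hB : ∀ l, IsCompact (B l)) (hne : ∀ l, (B l).Nonempty) (hnest : ChildrenNested B)
    {ι : Type*} (F : Finset ι) (D : ι → Set X) (hcov : limitSet B ⊆ ⋃ i ∈ F, D i)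
    {m : ℕ} (hm : m ≠ 0) : p ^ m ≤ ∑ i ∈ F, (wordsMeeting B (D i) m).ncard := by
  have hsub : {l : List (Fin p) | l.length = m} ⊆ ⋃ i ∈ F, wordsMeeting B (D i) m := by
    intro l hl
    have hl0 : l ≠ [] := by rintro rfl; exact hm hl.symm
    obtain ⟨x, hxB, hxK⟩ := inter_limitSet_nonempty hB hne hnest hl0
    obtain ⟨i, hi, hxD⟩ := mem_iUnion₂.mp (hcov hxK)
    exact mem_iUnion₂.mpr ⟨i, hi, hl, x, hxB, hxD⟩
  calc p ^ m = {l : List (Fin p) | l.length = m}.ncard := by simp [ncard_setOf_length_eq]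
    _ ≤ (⋃ i ∈ F, wordsMeeting B (D i) m).ncard :=
        Set.ncard_le_ncard hsub (F.finite_toSet.biUnion fun i _ => finite_wordsMeeting B _ m)
    _ ≤ ∑ i ∈ F, (wordsMeeting B (D i) m).ncard := F.set_ncard_biUnion_le _

end CantorTree

theorem pow_rpow_eq_inv_pow {c q β : ℝ} (hc : 0 ≤ c) (hcβ : c ^ β = q⁻¹) (k : ℕ) :
    (c ^ k) ^ β = (q ^ k)⁻¹ := by
  rw [← Real.rpow_natCast, ← Real.rpow_mul hc, mul_comm, Real.rpow_mul hc, hcβ,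
    Real.rpow_natCast, inv_pow]

theorem rpow_le_pow_mul_rpow {c q r ρ β : ℝ} (hc : 0 < c) (hr : 0 < r) (hβ : 0 ≤ β)
    (hcβ : c ^ β = q⁻¹) {k : ℕ} (h : c ^ k * r ≤ ρ) : r ^ β ≤ q ^ k * ρ ^ β := by
  have hq : 0 < q := inv_pos.mp (hcβ ▸ Real.rpow_pos_of_pos hc β)
  have hmono := Real.rpow_le_rpow (by positivity) h hβ
  rwa [Real.mul_rpow (by positivity) hr.le, pow_rpow_eq_inv_pow hc.le hcβ,
    inv_mul_le_iff₀ (by positivity)] at hmono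

section BallTree

variable {E : Type*} [NormedAddCommGroup E] [NormedSpace ℝ E] [FiniteDimensional ℝ E]
  [MeasurableSpace E] [BorelSpace E] {p : ℕ} {a : List (Fin p) → E} {B : List (Fin p) → Set E}
  {c r : ℝ}

theorem ncard_wordsMeeting_closedBall_le
    (hB : ∀ l, B l = closedBall (a l) (c ^ l.length * r)) (hdisj : ChildrenDisjoint B)
    (hnest : ChildrenNested B) (hc : 0 < c) (hr : 0 < r) (x : E) {ρ : ℝ} {k : ℕ}
    (hρ : ρ ≤ c ^ k * r) :
    ((wordsMeeting B (closedBall x ρ) k).ncard : ℝ) ≤ 3 ^ finrank ℝ E := by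
  set s := c ^ k * r
  have hs : 0 < s := by positivity
  have hfin := finite_wordsMeeting B (closedBall x ρ) k
  have hmem : ∀ l ∈ hfin.toFinset, l ∈ wordsMeeting B (closedBall x ρ) k :=
    fun l hl => hfin.mem_toFinset.mp hl
  have hball : ∀ l ∈ hfin.toFinset, B l = closedBall (a l) s := fun l hl => by
    rw [hB, (hmem l hl).1]
  have hpack := card_mul_pow_le_of_pairwiseDisjoint_closedBall hfin.toFinset a x hs
    (by positivity : 0 ≤ 3 * s) ?_ ?_
  · rw [Set.ncard_eq_toFinset_card _ hfin]
    rw [mul_pow 3 s] at hpack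
    exact le_of_mul_le_mul_right hpack (by positivity)
  · intro u hu v hv huv
    simp only [Function.onFun, ← hball u hu, ← hball v hv]
    exact hdisj.disjoint_of_length_eq hnest (((hmem u hu).1).trans (hmem v hv).1.symm) huv
  · intro l hl
    obtain ⟨z, hzB, hzD⟩ := (hmem l hl).2
    rw [hball l hl, mem_closedBall] at hzB
    rw [mem_closedBall] at hzD
    apply closedBall_subset_closedBall'
    linarith [dist_triangle (a l) z x, dist_comm z (a l)]

theorem ncard_wordsMeeting_closedBall_mul_rpow_le
    (hB : ∀ l, B l = closedBall (a l) (c ^ l.length * r)) (hdisj : ChildrenDisjoint B)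
    (hnest : ChildrenNested B) (hc0 : 0 < c) (hc1 : c < 1) (hr : 0 < r) {β : ℝ} (hβ : 0 ≤ β)
    (hcβ : c ^ β = (p : ℝ)⁻¹) (x : E) {ρ : ℝ} {m : ℕ} (hm : c ^ m * r < ρ) :
    ((wordsMeeting B (closedBall x ρ) m).ncard : ℝ) * r ^ β
      ≤ 3 ^ finrank ℝ E * p ^ (m + 1) * ρ ^ β := by
  classical
  have hsucc : c ^ (m + 1) * r < ρ := lt_of_le_of_lt (mul_le_mul_of_nonneg_right
    (pow_le_pow_of_le_one hc0.le hc1.le m.le_succ) hr.le) hm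
  have hex : ∃ j, c ^ (j + 1) * r < ρ := ⟨m, hsucc⟩
  set j := Nat.find hex
  have hjm : j ≤ m := Nat.find_min' hex hsucc
  have hcount : ((wordsMeeting B (closedBall x ρ) m).ncard : ℝ)
      ≤ 3 ^ finrank ℝ E * p ^ (m - j) := by
    rcases Nat.eq_zero_or_pos j with hj | hj
    · rw [hj, Nat.sub_zero]
      calc ((wordsMeeting B (closedBall x ρ) m).ncard : ℝ) ≤ p ^ m := by
            exact_mod_cast ncard_wordsMeeting_le _ m
        _ ≤ 3 ^ finrank ℝ E * p ^ m :=
            le_mul_of_one_le_left (by positivity) (one_le_pow₀ (by norm_num))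
    · -- by minimality of `j`, the level-`j` balls have radius at least `ρ`
      have hρj : ρ ≤ c ^ j * r := by
        have := Nat.find_min hex (Nat.sub_one_lt hj.ne')
        rwa [Nat.sub_add_cancel hj, not_lt] at this
      have hadd := ncard_wordsMeeting_add_le hnest (closedBall x ρ) hj.ne' (m - j)
      rw [Nat.add_sub_cancel' hjm] at hadd
      calc ((wordsMeeting B (closedBall x ρ) m).ncard : ℝ)
          ≤ p ^ (m - j) * ((wordsMeeting B (closedBall x ρ) j).ncard : ℝ) := by
            exact_mod_cast hadd
        _ ≤ p ^ (m - j) * 3 ^ finrank ℝ E := by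
            gcongr; exact ncard_wordsMeeting_closedBall_le hB hdisj hnest hc0 hr x hρj
        _ = 3 ^ finrank ℝ E * p ^ (m - j) := mul_comm _ _
  calc ((wordsMeeting B (closedBall x ρ) m).ncard : ℝ) * r ^ β
      ≤ 3 ^ finrank ℝ E * p ^ (m - j) * (p ^ (j + 1) * ρ ^ β) := by
        gcongr
        exact rpow_le_pow_mul_rpow hc0 hr hβ hcβ (Nat.find_spec hex).le
    _ = 3 ^ finrank ℝ E * p ^ (m + 1) * ρ ^ β := by
        rw [show m + 1 = (m - j) + (j + 1) by omega, pow_add]; ring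

theorem le_tsum_rpow_of_limitSet_subset_iUnion_ball
    (hB : ∀ l, B l = closedBall (a l) (c ^ l.length * r)) (hdisj : ChildrenDisjoint B)
    (hnest : ChildrenNested B) (hc0 : 0 < c) (hc1 : c < 1) (hr : 0 < r) {β : ℝ} (hβ : 0 ≤ β)
    (hcβ : c ^ β = (p : ℝ)⁻¹) (y : ℕ → E) (ρ : ℕ → ℝ) (hρ : ∀ k, 0 < ρ k)
    (hcov : limitSet B ⊆ ⋃ k, ball (y k) (ρ k)) :
    ENNReal.ofReal (r ^ β / (p * 3 ^ finrank ℝ E)) ≤ ∑' k, ENNReal.ofReal (ρ k ^ β) := by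
  have hp : (0 : ℝ) < p := inv_pos.mp (hcβ ▸ Real.rpow_pos_of_pos hc0 β)
  have hcpt : ∀ l, IsCompact (B l) := fun l => by rw [hB]; exact isCompact_closedBall _ _
  have hne : ∀ l, (B l).Nonempty := fun l => by
    rw [hB]; exact nonempty_closedBall.mpr (by positivity)
  obtain ⟨F, hF⟩ := (isCompact_limitSet hcpt).elim_finite_subcover _ (fun k => isOpen_ball) hcov
  have hsmall : ∀ᶠ m in atTop, ∀ k ∈ F, c ^ m * r < ρ k := by
    have hlim : Tendsto (fun m : ℕ => c ^ m * r) atTop (𝓝 0) := by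
      simpa using (tendsto_pow_atTop_nhds_zero_of_lt_one hc0.le hc1).mul_const r
    exact (eventually_all_finset F).mpr fun k _ => hlim.eventually (gt_mem_nhds (hρ k))
  obtain ⟨m, hm, hm0⟩ := (hsmall.and (eventually_ne_atTop 0)).exists
  let N k := (wordsMeeting B (closedBall (y k) (ρ k)) m).ncard
  have hcount : p ^ m ≤ ∑ k ∈ F, N k := pow_le_sum_ncard_wordsMeeting hcpt hne hnest F
    (fun k => closedBall (y k) (ρ k))
    (hF.trans (iUnion₂_mono fun k _ => ball_subset_closedBall)) hm0
  have hkey : (p : ℝ) ^ m * r ^ β ≤ 3 ^ finrank ℝ E * p ^ (m + 1) * ∑ k ∈ F, ρ k ^ β :=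
    calc (p : ℝ) ^ m * r ^ β ≤ (∑ k ∈ F, (N k : ℝ)) * r ^ β := by
          gcongr; exact_mod_cast hcount
      _ = ∑ k ∈ F, (N k : ℝ) * r ^ β := Finset.sum_mul ..
      _ ≤ ∑ k ∈ F, 3 ^ finrank ℝ E * p ^ (m + 1) * ρ k ^ β :=
          Finset.sum_le_sum fun k hk => ncard_wordsMeeting_closedBall_mul_rpow_le hB hdisj hnest
            hc0 hc1 hr hβ hcβ _ (hm k hk)
      _ = 3 ^ finrank ℝ E * p ^ (m + 1) * ∑ k ∈ F, ρ k ^ β := (Finset.mul_sum ..).symm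
  have hsum : r ^ β / (p * 3 ^ finrank ℝ E) ≤ ∑ k ∈ F, ρ k ^ β := by
    rw [div_le_iff₀ (by positivity)]
    refine le_of_mul_le_mul_left (hkey.trans_eq ?_) (pow_pos hp m)
    ring
  calc ENNReal.ofReal (r ^ β / (p * 3 ^ finrank ℝ E))
      ≤ ENNReal.ofReal (∑ k ∈ F, ρ k ^ β) := ENNReal.ofReal_le_ofReal hsum
    _ = ∑ k ∈ F, ENNReal.ofReal (ρ k ^ β) :=
        ENNReal.ofReal_sum_of_nonneg fun k _ => Real.rpow_nonneg (hρ k).le β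
    _ ≤ ∑' k, ENNReal.ofReal (ρ k ^ β) := ENNReal.sum_le_tsum F

end BallTree

theorem le_hausdorffContent_limitSet {n p : ℕ} {a : List (Fin p) → EuclideanSpace ℝ (Fin n)}
    {B : List (Fin p) → Set (EuclideanSpace ℝ (Fin n))} {c r : ℝ}
    (hB : ∀ l, B l = closedBall (a l) (c ^ l.length * r)) (hdisj : ChildrenDisjoint B)
    (hnest : ChildrenNested B) (hc0 : 0 < c) (hc1 : c < 1) (hr : 0 < r) {β : ℝ} (hβ : 0 ≤ β)
    (hcβ : c ^ β = (p : ℝ)⁻¹) :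
    ENNReal.ofReal (r ^ β / (p * 3 ^ n)) ≤ hausdorffContent β (limitSet B) :=
  le_iInf fun y => le_iInf fun ρ => le_iInf fun hρ => le_iInf fun hcov => by
    simpa using le_tsum_rpow_of_limitSet_subset_iUnion_ball hB hdisj hnest hc0 hc1 hr hβ hcβ y ρ
      hρ hcov

theorem exists_pos_add_rpow_lt {d β ε : ℝ} (hβ : 0 ≤ β) (hε : 0 < ε) :
    ∃ δ > 0, (d + δ) ^ β < d ^ β + ε := by
  have hcont : ContinuousAt (fun δ : ℝ => (d + δ) ^ β) 0 :=
    (continuous_const.add continuous_id).continuousAt.rpow_const (Or.inr hβ)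
  have hev : ∀ᶠ δ in 𝓝[>] 0, (d + δ) ^ β < d ^ β + ε :=
    nhdsWithin_le_nhds (hcont.eventually (gt_mem_nhds (by simpa using hε)))
  obtain ⟨δ, hδ, hpos⟩ := (hev.and self_mem_nhdsWithin).exists
  exact ⟨δ, hpos, hδ⟩

theorem ofReal_diam_rpow_le_iSup_ediam_rpow {X : Type*} [PseudoMetricSpace X] {s : Set X}
    (hs : ediam s ≠ ⊤) {β : ℝ} (hβ : 0 < β) :
    ENNReal.ofReal (diam s ^ β) ≤ ⨆ _ : s.Nonempty, ediam s ^ β := by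
  rcases s.eq_empty_or_nonempty with rfl | hne
  · simp [Real.zero_rpow hβ.ne']
  · rw [iSup_pos hne, ← ENNReal.ofReal_rpow_of_nonneg diam_nonneg hβ.le, diam,
      ENNReal.ofReal_toReal hs]

theorem hausdorffContent_le_hausdorffMeasure {n : ℕ} {β : ℝ} (hβ : 0 < β)
    (A : Set (EuclideanSpace ℝ (Fin n))) : hausdorffContent β A ≤ μH[β] A := by
  rw [Measure.hausdorffMeasure_apply]
  refine le_iSup₂_of_le 1 one_pos (le_iInf fun t => le_iInf fun hcov => le_iInf fun hdiam => ?_)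
  refine ENNReal.le_of_forall_pos_le_add fun ε hε _ => ?_
  obtain ⟨ε', hε'0, hε'⟩ :=
    ENNReal.exists_pos_sum_of_countable (ENNReal.coe_ne_zero.mpr hε.ne') ℕ
  classical
  choose δ hδ0 hδ using fun k =>
    exists_pos_add_rpow_lt (d := diam (t k)) hβ.le (NNReal.coe_pos.mpr (hε'0 k))
  set y : ℕ → EuclideanSpace ℝ (Fin n) := fun k => if h : (t k).Nonempty then h.some else 0
  have hsub : A ⊆ ⋃ k, ball (y k) (diam (t k) + δ k) := by
    intro z hz
    obtain ⟨k, hk⟩ := mem_iUnion.mp (hcov hz)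
    have hne : (t k).Nonempty := ⟨z, hk⟩
    have hyk : y k = hne.some := dif_pos hne
    refine mem_iUnion.mpr ⟨k, mem_ball.mpr ?_⟩
    rw [hyk]
    exact (dist_le_diam_of_mem' ((hdiam k).trans_lt one_lt_top).ne hk hne.some_mem).trans_lt
      (lt_add_of_pos_right _ (hδ0 k))
  have hterm : ∀ k, ENNReal.ofReal ((diam (t k) + δ k) ^ β)
      ≤ (⨆ _ : (t k).Nonempty, ediam (t k) ^ β) + ε' k := by
    intro k
    refine (ENNReal.ofReal_le_ofReal (hδ k).le).trans ?_
    rw [ENNReal.ofReal_add (Real.rpow_nonneg diam_nonneg β) (ε' k).coe_nonneg,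
      ENNReal.ofReal_coe_nnreal]
    gcongr
    exact ofReal_diam_rpow_le_iSup_ediam_rpow ((hdiam k).trans_lt one_lt_top).ne hβ
  calc hausdorffContent β A ≤ ∑' k, ENNReal.ofReal ((diam (t k) + δ k) ^ β) :=
        iInf_le_of_le y <| iInf_le_of_le _ <|
          iInf_le_of_le (fun k => add_pos_of_nonneg_of_pos diam_nonneg (hδ0 k)) <| iInf_le _ hsub
    _ ≤ ∑' k, ((⨆ _ : (t k).Nonempty, ediam (t k) ^ β) + ε' k) := ENNReal.tsum_le_tsum hterm
    _ = (∑' k, ⨆ _ : (t k).Nonempty, ediam (t k) ^ β) + ∑' k, (ε' k : ℝ≥0∞) :=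
        ENNReal.tsum_add
    _ ≤ _ := by gcongr

theorem ediam_closedBall_le_ofReal {X : Type*} [PseudoMetricSpace X] (x : X) (ρ : ℝ) :
    ediam (closedBall x ρ) ≤ ENNReal.ofReal (2 * ρ) :=
  ediam_le_of_forall_dist_le fun _ hy _ hz =>
    (dist_triangle_right _ _ x).trans (by rw [two_mul]; exact add_le_add hy hz)

theorem hausdorffMeasure_limitSet_le {X : Type*} [MetricSpace X] [MeasurableSpace X]
    [BorelSpace X] {p : ℕ} {a : List (Fin p) → X} {B : List (Fin p) → Set X} {c r : ℝ}
    (hB : ∀ l, B l = closedBall (a l) (c ^ l.length * r)) (hc0 : 0 < c) (hc1 : c < 1)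
    (hr : 0 < r) {β : ℝ} (hβ : 0 ≤ β) (hcβ : c ^ β = (p : ℝ)⁻¹) :
    μH[β] (limitSet B) ≤ ENNReal.ofReal ((2 * r) ^ β) := by
  have hp : (0 : ℝ) < p := inv_pos.mp (hcβ ▸ Real.rpow_pos_of_pos hc0 β)
  let level k := {l : List (Fin p) | l.length = k + 1}
  let δ k := 2 * r * c ^ (k + 1)
  have hdiam : ∀ k, ∀ l : level k, ediam (B l) ≤ ENNReal.ofReal (δ k) := by
    rintro k ⟨l, hl⟩
    rw [hB, show l.length = k + 1 from hl]
    exact (ediam_closedBall_le_ofReal _ _).trans_eq (congrArg ENNReal.ofReal (by ring))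
  have hδ : Tendsto (fun k => ENNReal.ofReal (δ k)) atTop (𝓝 0) := by
    rw [← ENNReal.ofReal_zero]
    refine ENNReal.tendsto_ofReal ?_
    simpa using ((tendsto_pow_atTop_nhds_zero_of_lt_one hc0.le hc1).comp
      (tendsto_add_atTop_nat 1)).const_mul (2 * r)
  -- the `p ^ (k + 1)` balls of level `k + 1` each contribute `(2 r) ^ β / p ^ (k + 1)`
  have hsum : ∀ k, ∑' l : level k, ediam (B l) ^ β ≤ ENNReal.ofReal ((2 * r) ^ β) := by
    intro k
    calc ∑' l : level k, ediam (B l) ^ β ≤ ∑' _ : level k, ENNReal.ofReal (δ k) ^ β :=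
          ENNReal.tsum_le_tsum fun l => ENNReal.rpow_le_rpow (hdiam k l) hβ
      _ = ENNReal.ofReal ((p : ℝ) ^ (k + 1) * (2 * r * c ^ (k + 1)) ^ β) := by
          rw [ENNReal.tsum_set_const, encard_setOf_length_eq, ENNReal.ofReal_rpow_of_nonneg
            (by positivity) hβ, ENNReal.ofReal_mul (by positivity), ENNReal.ofReal_pow hp.le]
          simp [δ]
      _ = ENNReal.ofReal ((2 * r) ^ β) := by
          rw [Real.mul_rpow (by positivity) (by positivity), pow_rpow_eq_inv_pow hc0.le hcβ,
            mul_left_comm, mul_inv_cancel₀ (by positivity), mul_one]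
  calc μH[β] (limitSet B)
      ≤ liminf (fun k => ∑' l : level k, ediam (B l) ^ β) atTop :=
        Measure.hausdorffMeasure_le_liminf_tsum β _ _ hδ (fun k (l : level k) => B l)
          (Eventually.of_forall hdiam)
          (Eventually.of_forall fun k => (iInter_subset _ k).trans_eq (biUnion_eq_iUnion _ _))
    _ ≤ ENNReal.ofReal ((2 * r) ^ β) := liminf_le_of_frequently_le (Frequently.of_forall hsum)

theorem stmt_10_general (n p : ℕ) (hp : 1 ≤ p) (c r : ℝ)
    (hc0 : 0 < c) (hc1 : c < 1) (hr : 0 < r)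
    (a : List (Fin p) → EuclideanSpace ℝ (Fin n))
    (B : List (Fin p) → Set (EuclideanSpace ℝ (Fin n)))
    (hB : ∀ l : List (Fin p), B l = Metric.closedBall (a l) (c ^ l.length * r))
    (hdisj : ∀ (l : List (Fin p)) (i j : Fin p), i ≠ j →
      Disjoint (B (l ++ [i])) (B (l ++ [j])))
    (hnest : ∀ (l : List (Fin p)) (i : Fin p), l ≠ [] → B (l ++ [i]) ⊆ B l)
    (K : Set (EuclideanSpace ℝ (Fin n)))
    (hK : K = ⋂ k : ℕ, ⋃ (l : List (Fin p)) (_ : l.length = k + 1), B l)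
    (β : ℝ) (hβ : β = -(Real.log p) / Real.log c) :
    ENNReal.ofReal (r ^ β / ((p : ℝ) * 3 ^ n)) ≤ hausdorffContent β K ∧
    dimH K = ENNReal.ofReal β := by
  obtain rfl : K = limitSet B := hK
  have hp0 : (0 : ℝ) < p := by exact_mod_cast hp
  have hlogc : Real.log c < 0 := Real.log_neg hc0 hc1
  have hβ0 : 0 ≤ β := hβ ▸ div_nonneg_of_nonpos
    (neg_nonpos.mpr (Real.log_nonneg (by exact_mod_cast hp))) hlogc.le
  have hcβ : c ^ β = (p : ℝ)⁻¹ := by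
    rw [Real.rpow_def_of_pos hc0, hβ, mul_div_cancel₀ _ hlogc.ne, Real.exp_neg, Real.exp_log hp0]
  have hcontent := le_hausdorffContent_limitSet hB hdisj hnest hc0 hc1 hr hβ0 hcβ
  have hβNN : ((β.toNNReal : NNReal) : ℝ) = β := Real.coe_toNNReal _ hβ0
  refine ⟨hcontent, le_antisymm ?_ ?_⟩
  · have hfin := (hausdorffMeasure_limitSet_le hB hc0 hc1 hr hβ0 hcβ).trans_lt ofReal_lt_top
    exact dimH_le_of_hausdorffMeasure_ne_top (by rw [hβNN]; exact hfin.ne)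
  · rcases hβ0.eq_or_lt with rfl | hβpos
    · simp
    have hpos : 0 < μH[β] (limitSet B) :=
      (ENNReal.ofReal_pos.mpr (by positivity)).trans_le
        (hcontent.trans (hausdorffContent_le_hausdorffMeasure hβpos _))
    exact le_dimH_of_hausdorffMeasure_ne_zero (by rw [hβNN]; exact hpos.ne')

theorem stmt_10 (n p : ℕ) (hn : 2 ≤ n) (hp : 1 ≤ p) (c r : ℝ)
    (hc0 : 0 < c) (hc1 : c < 1) (hr : 0 < r)
    (a : List (Fin p) → EuclideanSpace ℝ (Fin n))
    (B : List (Fin p) → Set (EuclideanSpace ℝ (Fin n)))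
    (hB : ∀ l : List (Fin p), B l = Metric.closedBall (a l) (c ^ l.length * r))
    (hdisj : ∀ (l : List (Fin p)) (i j : Fin p), i ≠ j →
      Disjoint (B (l ++ [i])) (B (l ++ [j])))
    (hnest : ∀ (l : List (Fin p)) (i : Fin p), l ≠ [] → B (l ++ [i]) ⊆ B l)
    (K : Set (EuclideanSpace ℝ (Fin n)))
    (hK : K = ⋂ k : ℕ, ⋃ (l : List (Fin p)) (_ : l.length = k + 1), B l)
    (β : ℝ) (hβ : β = -(Real.log p) / Real.log c) :
    ENNReal.ofReal (r ^ β / ((p : ℝ) * 3 ^ n)) ≤ hausdorffContent β K ∧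
    dimH K = ENNReal.ofReal β :=
  stmt_10_general n p hp c r hc0 hc1 hr a B hB hdisj hnest K hK β hβ
end

section
/- Let n ≥ 2 be an integer and K > 1 a real number, and define g(x) = log(1 + x)·(log(K/x))^{n−1} for 0 < x ≤ 1. Then g(x) ≤ K·((n−1)/e)^{n−1} for all 0 < x ≤ 1. In particular, for all x with 0 < x < 1, (log(K/x))^{1−n} ≥ (1/K)·(e/(n−1))^{n−1}·log(1 + x). -/
/-!
With `t = log (K / x)`, the function `t ↦ t ^ m * exp (-t)` is maximal at `t = m`, so
`t ^ m ≤ exp t * (m / e) ^ m = (K / x) * (m / e) ^ m`; multiplying by `log (1 + x) ≤ x`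
cancels the `x`. The second inequality is the first one solved for `log (K / x) ^ (1 - n)`.
-/

open Real

theorem pow_le_exp_mul_div_exp_pow (m : ℕ) {t : ℝ} (ht : 0 ≤ t) :
    t ^ m ≤ exp t * (m / exp 1) ^ m := by
  rcases Nat.eq_zero_or_pos m with rfl | hm
  · simpa using one_le_exp ht
  have hm' : (0 : ℝ) < m := Nat.cast_pos.mpr hm
  have hle : t ≤ m * exp (t / m - 1) := by
    have := add_one_le_exp (t / m - 1)
    rw [sub_add_cancel, div_le_iff₀ hm'] at this
    linarith
  calc t ^ m ≤ (m * exp (t / m - 1)) ^ m := pow_le_pow_left₀ ht hle m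
    _ = exp t * (m / exp 1) ^ m := by
      rw [mul_pow, ← exp_nat_mul, mul_sub, mul_div_cancel₀ t hm'.ne', mul_one, exp_sub,
        div_pow, ← exp_nat_mul, mul_one]
      ring

theorem log_one_add_mul_log_div_pow_le (m : ℕ) {K x : ℝ} (hx : 0 < x) (hxK : x ≤ K) :
    log (1 + x) * log (K / x) ^ m ≤ K * (m / exp 1) ^ m := by
  have ht : 0 ≤ log (K / x) := log_nonneg ((one_le_div hx).mpr hxK)
  have hlog : log (1 + x) ≤ x := by linarith [log_le_sub_one_of_pos (by linarith : 0 < 1 + x)]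
  calc log (1 + x) * log (K / x) ^ m ≤ x * (exp (log (K / x)) * (m / exp 1) ^ m) :=
        mul_le_mul hlog (pow_le_exp_mul_div_exp_pow m ht) (by positivity) hx.le
    _ = K * (m / exp 1) ^ m := by
      rw [exp_log (div_pos (hx.trans_le hxK) hx), ← mul_assoc, mul_div_cancel₀ K hx.ne']

theorem inv_mul_exp_div_pow_mul_log_one_add_le (m : ℕ) {K x : ℝ} (hx : 0 < x) (hxK : x < K) :
    K⁻¹ * (exp 1 / m) ^ m * log (1 + x) ≤ (log (K / x) ^ m)⁻¹ := by
  have hK : 0 < K := hx.trans hxK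
  have ht : 0 < log (K / x) := log_pos ((one_lt_div hx).mpr hxK)
  have hc : 0 < ((m : ℝ) / exp 1) ^ m := by
    rcases Nat.eq_zero_or_pos m with rfl | hm
    · simp
    · positivity
  rw [← inv_div, inv_pow, ← mul_inv, inv_mul_le_iff₀ (mul_pos hK hc),
    le_mul_inv_iff₀ (pow_pos ht m)]
  exact log_one_add_mul_log_div_pow_le m hx hxK.le

theorem stmt_11 (n : ℕ) (hn : 2 ≤ n) (K : ℝ) (hK : 1 < K) :
    (∀ x : ℝ, 0 < x → x ≤ 1 →
      Real.log (1 + x) * Real.log (K / x) ^ (n - 1) ≤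
        K * (((n : ℝ) - 1) / Real.exp 1) ^ (n - 1)) ∧
    (∀ x : ℝ, 0 < x → x < 1 →
      (1 / K) * (Real.exp 1 / ((n : ℝ) - 1)) ^ (n - 1) * Real.log (1 + x) ≤
        Real.log (K / x) ^ ((1 : ℝ) - (n : ℝ))) := by
  have hcast : (n : ℝ) - 1 = ((n - 1 : ℕ) : ℝ) := by rw [Nat.cast_sub (by omega), Nat.cast_one]
  refine ⟨fun x hx hx1 => ?_, fun x hx hx1 => ?_⟩
  · rw [hcast]
    exact log_one_add_mul_log_div_pow_le _ hx (by linarith)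
  · have hexp : (1 : ℝ) - n = -((n - 1 : ℕ) : ℝ) := by rw [← hcast]; ring
    rw [hcast, one_div, hexp, rpow_neg (log_nonneg ((one_le_div hx).mpr (by linarith))),
      rpow_natCast]
    exact inv_mul_exp_div_pow_mul_log_one_add_le _ hx (by linarith)
end
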